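/- Let $(A,\circ_A)$ be a Zinbiel algebra and $r\in A\otimes A$ whose skew-symmetric part is $(L,L+R)$-invariant, with $I = r_+-r_-$. Define $\xi\cdot_+\eta := R^*_{I\eta}\xi$ on $A^*$. Then $(A^*,\cdot_+)$ is a Zinbiel algebra. -/

import Mathlib

open scoped TensorProduct

/-- The pairing of `ξ ⊗ η` with a 2-tensor: `(ξ ⊗ η)(Σ aᵢ ⊗ bᵢ) = Σ ξ(aᵢ) η(bᵢ)`. -/
noncomputable def tensorPair {K : Type*} [Field K] {A : Type*} [AddCommGroup A] [Module K A]
    (ξ η : Module.Dual K A) : (A ⊗[K] A) →ₗ[K] K :=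
  TensorProduct.lift ((LinearMap.lsmul K K ∘ₗ ξ).compl₂ η)

/-- The product `ξ ·₊ η := R*_{Iη} ξ` on `A*`, where `⟨R_x* ξ, y⟩ = -⟨ξ, y ∘ x⟩`. -/
def dualPlusMul {K : Type*} [Field K] {A : Type*} [AddCommGroup A] [Module K A]
    (mul : A →ₗ[K] A →ₗ[K] A) (I : Module.Dual K A →ₗ[K] A)
    (ξ η : Module.Dual K A) : Module.Dual K A :=
  -(ξ ∘ₗ mul.flip (I η))

/-!
The map `I = r₊ - r₋` satisfies `⟨η, I ξ⟩ = r(ξ, η) - r(η, ξ)`, so it is skew, and pairing the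
invariance of the skew part of `r` with `ξ ⊗ η` turns it into `I (ξ ∘ L_x) = x ∘ I ξ + I ξ ∘ x`.
Together these give `⟨α, z ∘ I β⟩ = -⟨β, z ∘ I α + I α ∘ z⟩`. Evaluated at `y`, both sides of the
Zinbiel identity for `·₊` reduce by this to `-⟨η, y ∘ (I ξ ∘ I θ)⟩`: one side through the Zinbiel
identity of `A`, the other through the left commutativity `x ∘ (y ∘ z) = y ∘ (x ∘ z)` it implies.
-/

section

open TensorProduct

variable {K : Type*} [Field K] {A : Type*} [AddCommGroup A] [Module K A]

@[simp]
lemma tensorPair_tmul (ξ η : Module.Dual K A) (a b : A) :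
    tensorPair ξ η (a ⊗ₜ b) = ξ a * η b := by
  simp [tensorPair]

lemma tensorPair_map (ξ η : Module.Dual K A) (f g : A →ₗ[K] A) (t : A ⊗[K] A) :
    tensorPair ξ η (map f g t) = tensorPair (ξ ∘ₗ f) (η ∘ₗ g) t := by
  induction t using TensorProduct.induction_on with
  | zero => simp
  | tmul a b => simp
  | add t u ht hu => simp only [map_add, ht, hu]

lemma tensorPair_comm (ξ η : Module.Dual K A) (t : A ⊗[K] A) :
    tensorPair ξ η (TensorProduct.comm K A A t) = tensorPair η ξ t := by
  induction t using TensorProduct.induction_on with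
  | zero => simp
  | tmul a b => simp [mul_comm]
  | add t u ht hu => simp only [map_add, ht, hu]

lemma apply_sub_apply_eq_tensorPair {r : A ⊗[K] A} {rplus rminus : Module.Dual K A →ₗ[K] A}
    (hrplus : ∀ ξ η : Module.Dual K A, η (rplus ξ) = tensorPair ξ η r)
    (hrminus : ∀ ξ η : Module.Dual K A, ξ (rminus η) = tensorPair ξ η r)
    (ξ η : Module.Dual K A) :
    η ((rplus - rminus) ξ) = tensorPair ξ η (r - TensorProduct.comm K A A r) := by
  simp [hrplus, hrminus, tensorPair_comm]

lemma apply_sub_apply_eq_neg {r : A ⊗[K] A} {rplus rminus : Module.Dual K A →ₗ[K] A}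
    (hrplus : ∀ ξ η : Module.Dual K A, η (rplus ξ) = tensorPair ξ η r)
    (hrminus : ∀ ξ η : Module.Dual K A, ξ (rminus η) = tensorPair ξ η r)
    (ξ η : Module.Dual K A) :
    η ((rplus - rminus) ξ) = -ξ ((rplus - rminus) η) := by
  simp only [LinearMap.sub_apply, map_sub, hrplus, hrminus]
  ring

lemma apply_comp_eq_of_map_sub_map_eq_zero {s : A ⊗[K] A} {I : Module.Dual K A →ₗ[K] A}
    (hI : ∀ ξ η : Module.Dual K A, η (I ξ) = tensorPair ξ η s) {f g : A →ₗ[K] A}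
    (hs : (map f LinearMap.id - map LinearMap.id g : A ⊗[K] A →ₗ[K] A ⊗[K] A) s = 0)
    (ξ : Module.Dual K A) :
    I (ξ ∘ₗ f) = g (I ξ) := by
  have hs' : map f LinearMap.id s = map LinearMap.id g s := sub_eq_zero.mp hs
  refine Module.eval_apply_injective K (LinearMap.ext fun η => ?_)
  calc η (I (ξ ∘ₗ f)) = tensorPair ξ η (map f LinearMap.id s) := by
        rw [hI, tensorPair_map, LinearMap.comp_id]
    _ = (η ∘ₗ g) (I ξ) := by rw [hs', tensorPair_map, LinearMap.comp_id, hI]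

section Zinbiel

variable {mul : A →ₗ[K] A →ₗ[K] A}

lemma zinbiel_left_comm (hZ : ∀ x y z : A, mul x (mul y z) = mul (mul x y + mul y x) z)
    (x y z : A) : mul x (mul y z) = mul y (mul x z) := by
  rw [hZ, hZ y, add_comm]

lemma apply_mul_apply_eq_neg {I : Module.Dual K A →ₗ[K] A}
    (hskew : ∀ ξ η : Module.Dual K A, η (I ξ) = -ξ (I η))
    (hinv : ∀ (x : A) (ξ : Module.Dual K A), I (ξ ∘ₗ mul x) = mul x (I ξ) + mul (I ξ) x)
    (z : A) (ξ η : Module.Dual K A) :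
    ξ (mul z (I η)) = -η (mul z (I ξ) + mul (I ξ) z) := by
  rw [← hinv, hskew (ξ ∘ₗ mul z), neg_neg, LinearMap.comp_apply]

theorem dualPlusMul_zinbiel_of_skew_of_invariant
    (hZ : ∀ x y z : A, mul x (mul y z) = mul (mul x y + mul y x) z)
    {I : Module.Dual K A →ₗ[K] A}
    (hskew : ∀ ξ η : Module.Dual K A, η (I ξ) = -ξ (I η))
    (hinv : ∀ (x : A) (ξ : Module.Dual K A), I (ξ ∘ₗ mul x) = mul x (I ξ) + mul (I ξ) x)
    (ξ η θ : Module.Dual K A) :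
    dualPlusMul mul I ξ (dualPlusMul mul I η θ)
      = dualPlusMul mul I (dualPlusMul mul I ξ η + dualPlusMul mul I η ξ) θ := by
  ext y
  simp only [dualPlusMul, LinearMap.neg_apply, LinearMap.comp_apply, LinearMap.flip_apply,
    LinearMap.add_apply, map_neg, neg_neg, neg_add]
  calc ξ (mul y (I (η ∘ₗ mul.flip (I θ))))
      = -η (mul (mul y (I ξ) + mul (I ξ) y) (I θ)) := by
        rw [apply_mul_apply_eq_neg hskew hinv]; rfl
    _ = -η (mul y (mul (I ξ) (I θ))) := by rw [← hZ]
    _ = ξ (mul (mul y (I θ)) (I η)) + η (mul (mul y (I θ)) (I ξ)) := by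
        rw [apply_mul_apply_eq_neg hskew hinv, map_add, zinbiel_left_comm hZ]
        ring

end Zinbiel

end

/-- Let `(A, ∘)` be a Zinbiel algebra and `r ∈ A ⊗ A` whose skew-symmetric part is
`(L, L+R)`-invariant, with `I = r₊ - r₋`.  Then `ξ ·₊ η := R*_{Iη} ξ` makes `(A*, ·₊)` a
Zinbiel algebra. -/
theorem dual_plus_zinbiel {K : Type*} [Field K] {A : Type*} [AddCommGroup A]
    [Module K A] (h2 : (2 : K) ≠ 0)
    (mul : A →ₗ[K] A →ₗ[K] A)
    (hZ : ∀ x y z : A, mul x (mul y z) = mul (mul x y + mul y x) z)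
    (r : A ⊗[K] A) (rplus rminus : Module.Dual K A →ₗ[K] A)
    (hrplus : ∀ ξ η : Module.Dual K A, η (rplus ξ) = tensorPair ξ η r)
    (hrminus : ∀ ξ η : Module.Dual K A, ξ (rminus η) = tensorPair ξ η r)
    (hinv : ∀ x : A,
      (TensorProduct.map (mul x) (LinearMap.id : A →ₗ[K] A)
        - TensorProduct.map (LinearMap.id : A →ₗ[K] A) (mul x + mul.flip x))
        ((2 : K)⁻¹ • (r - TensorProduct.comm K A A r)) = 0) :
    ∀ ξ η θ : Module.Dual K A,
      dualPlusMul mul (rplus - rminus) ξ (dualPlusMul mul (rplus - rminus) η θ)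
        = dualPlusMul mul (rplus - rminus)
            (dualPlusMul mul (rplus - rminus) ξ η
              + dualPlusMul mul (rplus - rminus) η ξ) θ := by
  have hinvI (x : A) (ξ : Module.Dual K A) :
      (rplus - rminus) (ξ ∘ₗ mul x) = mul x ((rplus - rminus) ξ) + mul ((rplus - rminus) ξ) x :=
    apply_comp_eq_of_map_sub_map_eq_zero (apply_sub_apply_eq_tensorPair hrplus hrminus)
      (((map_smul _ _ _).symm.trans (hinv x) |> smul_eq_zero.mp).resolve_left (inv_ne_zero h2)) ξ
  exact dualPlusMul_zinbiel_of_skew_of_invariant hZ (apply_sub_apply_eq_neg hrplus hrminus) hinvI
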